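/- arXiv:1803.05380 — 9 statements merged into one kernel-verified Lean document; each statement's English description precedes it below -/
import Mathlib

section
/- Suppose the spanning tree polynomial is written as P_n = Σ_{i=1}^t g_i · h_i, where each g_i and each h_i is a nonzero polynomial with nonnegative real coefficients. Then for every i the following holds: every monomial occurring (with nonzero coefficient) in g_i or in h_i is multilinear, i.e. of the form Π_{e∈A} x_e for a set A of edges; and for every monomial Π_{e∈A} x_e of g_i and every monomial Π_{e∈B} x_e of h_i, the edge sets A and B are disjoint and A ∪ B is a spanning tree of K_n. In particular, the families of supports of the monomials of g_i and of h_i form a rectangle. -/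
open Finset

/-- An edge set of `K_n` is valid if it contains no loops. -/
def ValidEdges {n : ℕ} (E : Finset (Sym2 (Fin n))) : Prop := ∀ e ∈ E, ¬ e.IsDiag

/-- `E` is (the edge set of) a spanning tree of `K_n`. -/
def IsSpanningTree {n : ℕ} (E : Finset (Sym2 (Fin n))) : Prop :=
  ValidEdges E ∧ (SimpleGraph.fromEdgeSet (E : Set (Sym2 (Fin n)))).IsTree

/-- `E` is (the edge set of) a forest in `K_n`. -/
def IsForest {n : ℕ} (E : Finset (Sym2 (Fin n))) : Prop :=
  ValidEdges E ∧ (SimpleGraph.fromEdgeSet (E : Set (Sym2 (Fin n)))).IsAcyclic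

/-- The pair of families `𝒜, ℬ` of forests forms a rectangle: the members of each pair
are edge-disjoint and their union is a spanning tree of `K_n`. -/
def IsRectangle {n : ℕ} (𝒜 ℬ : Set (Finset (Sym2 (Fin n)))) : Prop :=
  (∀ A ∈ 𝒜, IsForest A) ∧ (∀ B ∈ ℬ, IsForest B) ∧
  ∀ A ∈ 𝒜, ∀ B ∈ ℬ, Disjoint A B ∧ IsSpanningTree (A ∪ B)

/-- The family `ℛ = 𝒜 ∨ ℬ = {A ∪ B : A ∈ 𝒜, B ∈ ℬ}` of spanning trees of a rectangle. -/
def rectFamily {n : ℕ} (𝒜 ℬ : Set (Finset (Sym2 (Fin n)))) : Set (Finset (Sym2 (Fin n))) :=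
  {T | ∃ A ∈ 𝒜, ∃ B ∈ ℬ, T = A ∪ B}

/-- A rectangle is balanced if `(n-1)/3 ≤ |A|, |B| ≤ 2(n-1)/3` for all `A ∈ 𝒜`, `B ∈ ℬ`. -/
def IsBalanced {n : ℕ} (𝒜 ℬ : Set (Finset (Sym2 (Fin n)))) : Prop :=
  (∀ A ∈ 𝒜, ((n : ℝ) - 1) / 3 ≤ A.card ∧ (A.card : ℝ) ≤ 2 * ((n : ℝ) - 1) / 3) ∧
  (∀ B ∈ ℬ, ((n : ℝ) - 1) / 3 ≤ B.card ∧ (B.card : ℝ) ≤ 2 * ((n : ℝ) - 1) / 3)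

open scoped Classical in
/-- The spanning tree polynomial `P_n(x) = Σ_T Π_{e ∈ T} x_e`, the sum over all spanning
trees `T` of `K_n`, with variables indexed by the edges of `K_n`. -/
noncomputable def spanningTreePoly (n : ℕ) : MvPolynomial (Sym2 (Fin n)) ℝ :=
  ∑ T ∈ Finset.univ.filter (fun T : Finset (Sym2 (Fin n)) => IsSpanningTree T),
    ∏ e ∈ T, MvPolynomial.X e

/-!
Nonnegativity rules out cancellation. For monomials `x^a` of `g i` and `x^b` of `h i`, the
coefficient of `x^(a+b)` in `g i * h i` is at least `coeff a (g i) * coeff b (h i) > 0`, and every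
other summand of `∑ j, g j * h j` contributes a nonnegative amount, so `x^(a+b)` is a monomial of
`P_n`. Hence `a + b` is the 0/1 indicator of a spanning tree, which forces `a` and `b` to be 0/1
vectors with disjoint supports whose union is that tree. As both supports are nonempty, each
monomial support of `g i` lies inside some spanning tree, hence is a forest; likewise for `h i`.
-/

namespace MvPolynomial

variable {σ R : Type*} [CommSemiring R] [PartialOrder R] [IsStrictOrderedRing R]

lemma coeff_mul_nonneg {p q : MvPolynomial σ R} (hp : ∀ m, 0 ≤ p.coeff m)
    (hq : ∀ m, 0 ≤ q.coeff m) (m : σ →₀ ℕ) : 0 ≤ (p * q).coeff m := by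
  classical
  rw [coeff_mul]
  exact Finset.sum_nonneg fun _ _ => mul_nonneg (hp _) (hq _)

lemma coeff_mul_add_pos {p q : MvPolynomial σ R} (hp : ∀ m, 0 ≤ p.coeff m)
    (hq : ∀ m, 0 ≤ q.coeff m) {a b : σ →₀ ℕ} (ha : a ∈ p.support) (hb : b ∈ q.support) :
    0 < (p * q).coeff (a + b) := by
  classical
  have hpa : 0 < p.coeff a := (hp a).lt_of_ne' (mem_support_iff.mp ha)
  have hqb : 0 < q.coeff b := (hq b).lt_of_ne' (mem_support_iff.mp hb)
  rw [coeff_mul]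
  exact Finset.sum_pos' (fun _ _ => mul_nonneg (hp _) (hq _))
    ⟨(a, b), mem_antidiagonal.mpr rfl, mul_pos hpa hqb⟩

lemma add_mem_support_sum_mul {ι : Type*} {s : Finset ι} {p q : ι → MvPolynomial σ R}
    (hp : ∀ i m, 0 ≤ (p i).coeff m) (hq : ∀ i m, 0 ≤ (q i).coeff m) {i : ι} (hi : i ∈ s)
    {a b : σ →₀ ℕ} (ha : a ∈ (p i).support) (hb : b ∈ (q i).support) :
    a + b ∈ (∑ j ∈ s, p j * q j).support := by
  rw [mem_support_iff, coeff_sum]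
  exact (Finset.sum_pos' (fun j _ => coeff_mul_nonneg (hp j) (hq j) _)
    ⟨i, hi, coeff_mul_add_pos (hp i) (hq i) ha hb⟩).ne'

end MvPolynomial

open MvPolynomial

lemma IsSpanningTree.isForest_of_subset {n : ℕ} {T E : Finset (Sym2 (Fin n))}
    (hT : IsSpanningTree T) (hE : E ⊆ T) : IsForest E :=
  ⟨fun e he => hT.1 e (hE he),
    hT.2.isAcyclic.anti (SimpleGraph.fromEdgeSet_mono (by exact_mod_cast hE))⟩

lemma isRectangle_of_nonempty {n : ℕ} {𝒜 ℬ : Set (Finset (Sym2 (Fin n)))}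
    (h𝒜 : 𝒜.Nonempty) (hℬ : ℬ.Nonempty)
    (h : ∀ A ∈ 𝒜, ∀ B ∈ ℬ, Disjoint A B ∧ IsSpanningTree (A ∪ B)) : IsRectangle 𝒜 ℬ := by
  obtain ⟨A₀, hA₀⟩ := h𝒜
  obtain ⟨B₀, hB₀⟩ := hℬ
  exact ⟨fun A hA => (h A hA B₀ hB₀).2.isForest_of_subset subset_union_left,
    fun B hB => (h A₀ hA₀ B hB).2.isForest_of_subset subset_union_right, h⟩

lemma coeff_spanningTreePoly_ne_zero {n : ℕ} {m : Sym2 (Fin n) →₀ ℕ}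
    (hm : (spanningTreePoly n).coeff m ≠ 0) : (∀ e, m e ≤ 1) ∧ IsSpanningTree m.support := by
  rw [spanningTreePoly, coeff_sum] at hm
  obtain ⟨T, hT, hne⟩ := exists_ne_zero_of_sum_ne_zero hm
  have hprod := coeff_prod_X_pow (R := ℝ) m (fun _ => 1) T
  simp only [pow_one] at hprod
  rw [hprod, ne_eq, ite_eq_right_iff, Classical.not_imp] at hne
  obtain ⟨rfl, -⟩ := hne
  refine ⟨fun e => ?_, ?_⟩
  · rw [Finsupp.indicator_apply]
    split <;> simp
  · convert (mem_filter.mp hT).2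
    ext e
    simp [Finsupp.indicator_apply]

lemma coeff_spanningTreePoly_add_ne_zero {n : ℕ} {a b : Sym2 (Fin n) →₀ ℕ}
    (h : (spanningTreePoly n).coeff (a + b) ≠ 0) :
    (∀ e, a e ≤ 1) ∧ (∀ e, b e ≤ 1) ∧ Disjoint a.support b.support ∧
      IsSpanningTree (a.support ∪ b.support) := by
  obtain ⟨hle, htree⟩ := coeff_spanningTreePoly_ne_zero h
  have hab (e : Sym2 (Fin n)) : a e + b e ≤ 1 := hle e
  refine ⟨fun e => by have := hab e; omega, fun e => by have := hab e; omega, ?_, ?_⟩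
  · refine Finset.disjoint_left.mpr fun e hae hbe => ?_
    rw [Finsupp.mem_support_iff] at hae hbe
    have := hab e
    omega
  · rwa [Finsupp.support_add_eq_union] at htree

/-- If `P_n = Σ_{i=1}^t g_i · h_i` with all `g_i, h_i` nonzero polynomials with
nonnegative coefficients, then for every `i`: every monomial of `g_i` and of `h_i` is
multilinear, and for all monomials `Π_{e∈A} x_e` of `g_i` and `Π_{e∈B} x_e` of `h_i` the sets
`A`, `B` are disjoint and `A ∪ B` is a spanning tree of `K_n`; in particular the families of
supports of the monomials of `g_i` and of `h_i` form a rectangle. -/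
theorem spanningTreePoly_decomposition_rectangles (n t : ℕ)
    (g h : Fin t → MvPolynomial (Sym2 (Fin n)) ℝ)
    (hg0 : ∀ i, g i ≠ 0) (hh0 : ∀ i, h i ≠ 0)
    (hgpos : ∀ i mono, 0 ≤ (g i).coeff mono) (hhpos : ∀ i mono, 0 ≤ (h i).coeff mono)
    (heq : spanningTreePoly n = ∑ i, g i * h i) :
    ∀ i : Fin t,
      (∀ ma ∈ (g i).support, ∀ e, ma e ≤ 1) ∧
      (∀ mb ∈ (h i).support, ∀ e, mb e ≤ 1) ∧
      (∀ ma ∈ (g i).support, ∀ mb ∈ (h i).support,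
        Disjoint ma.support mb.support ∧ IsSpanningTree (ma.support ∪ mb.support)) ∧
      IsRectangle (((g i).support.image Finsupp.support : Finset _) : Set (Finset (Sym2 (Fin n))))
        (((h i).support.image Finsupp.support : Finset _) : Set (Finset (Sym2 (Fin n)))) := by
  intro i
  have hsplit : ∀ a ∈ (g i).support, ∀ b ∈ (h i).support,
      (∀ e, a e ≤ 1) ∧ (∀ e, b e ≤ 1) ∧ Disjoint a.support b.support ∧
        IsSpanningTree (a.support ∪ b.support) := fun a ha b hb =>
    coeff_spanningTreePoly_add_ne_zero <| mem_support_iff.mp <|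
      heq ▸ add_mem_support_sum_mul hgpos hhpos (mem_univ i) ha hb
  obtain ⟨a₀, ha₀⟩ := support_nonempty.mpr (hg0 i)
  obtain ⟨b₀, hb₀⟩ := support_nonempty.mpr (hh0 i)
  refine ⟨fun a ha => (hsplit a ha b₀ hb₀).1, fun b hb => (hsplit a₀ ha₀ b hb).2.1,
    fun a ha b hb => (hsplit a ha b hb).2.2,
    isRectangle_of_nonempty ⟨_, mem_coe.mpr (mem_image_of_mem _ ha₀)⟩
      ⟨_, mem_coe.mpr (mem_image_of_mem _ hb₀)⟩ ?_⟩
  simp only [coe_image, Set.forall_mem_image, mem_coe]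
  exact fun a ha b hb => (hsplit a ha b hb).2.2
end

section
/- Let ℛ = 𝒜 ∨ ℬ be a rectangle in K_n, and suppose T_0 = A_0 ∪ B_0 with A_0 ∈ 𝒜 and B_0 ∈ ℬ is a spanning star-tree with star centers c_1, …, c_m. For each non-center vertex v let e_v denote the unique edge of T_0 joining v to a center, and set U = {v : e_v ∈ A_0} and V = {v : e_v ∈ B_0}. Then for every A ∈ 𝒜, every B ∈ ℬ, every u ∈ U and every v ∈ V: the number of edges of A joining u to a vertex of V is at most m, and the number of edges of B joining a vertex of U to v is at most m. -/
/-!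
Fix `A ∈ 𝒜` and `u ∈ U`. Every `v ∈ V` is joined by an edge of `B₀` to a center, and `A ∪ B₀`
is a tree. If two `A`-neighbours `v₁ ≠ v₂` of `u` in `V` were joined to the same center `c`,
then `u v₁ c v₂` would be a cycle in `A ∪ B₀`. Hence `v ↦ c` is injective into the `m` centers.
The bound for `B ∈ ℬ` is symmetric, using the tree `A₀ ∪ B`.
-/

open Finset

/-- `S` is a `d`-star with center `z`: the edge set joining `z` to each of `d` leaves. -/
def IsStar {n : ℕ} (d : ℕ) (S : Finset (Sym2 (Fin n))) (z : Fin n) : Prop :=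
  ∃ L : Finset (Fin n), z ∉ L ∧ L.card = d ∧ S = L.image (fun v => s(z, v))

/-- `F` is a star factor of `K_n` with center set `C` and leaf sets `L`: a spanning forest
consisting of `m` vertex-disjoint `d`-stars. -/
def IsStarFactorOn {n : ℕ} (m d : ℕ) (F : Finset (Sym2 (Fin n))) (C : Finset (Fin n))
    (L : Fin n → Finset (Fin n)) : Prop :=
  C.card = m ∧ (∀ z ∈ C, z ∉ L z ∧ (L z).card = d) ∧
  (∀ z ∈ C, ∀ z' ∈ C, z ≠ z' → Disjoint (insert z (L z)) (insert z' (L z'))) ∧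
  C.biUnion (fun z => insert z (L z)) = Finset.univ ∧
  F = C.biUnion (fun z => (L z).image (fun v => s(z, v)))

/-- `F` is a star factor of `K_n`: a spanning forest consisting of `m` vertex-disjoint
`d`-stars. -/
def IsStarFactor {n : ℕ} (m d : ℕ) (F : Finset (Sym2 (Fin n))) : Prop :=
  ∃ C L, IsStarFactorOn m d F C L

/-- `z` is a center of a `d`-star contained in `F`. -/
def IsCenterOf {n : ℕ} (d : ℕ) (F : Finset (Sym2 (Fin n))) (z : Fin n) : Prop :=
  ∃ S, S ⊆ F ∧ IsStar d S z

/-- `P` is the edge set of a path whose vertex set is exactly `C`. -/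
def IsPathOn {n : ℕ} (C : Finset (Fin n)) (P : Finset (Sym2 (Fin n))) : Prop :=
  ∃ l : List (Fin n), l.Nodup ∧ l.toFinset = C ∧
    P = ((l.zip l.tail).map (fun p => s(p.1, p.2))).toFinset

/-- `T` is a spanning star-tree: a spanning tree consisting of `m` vertex-disjoint `d`-stars
whose centers are joined into a path. -/
def IsSpanningStarTree {n : ℕ} (m d : ℕ) (T : Finset (Sym2 (Fin n))) : Prop :=
  IsSpanningTree T ∧ ∃ F P C L, IsStarFactorOn m d F C L ∧ IsPathOn C P ∧
    Disjoint F P ∧ T = F ∪ P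

lemma SimpleGraph.IsAcyclic.eq_of_adj_of_adj {V : Type*} {G : SimpleGraph V} (hG : G.IsAcyclic)
    {u c v₁ v₂ : V} (huc : u ≠ c) (hu₁ : G.Adj u v₁) (h₁c : G.Adj v₁ c) (hu₂ : G.Adj u v₂)
    (h₂c : G.Adj v₂ c) : v₁ = v₂ := by
  have hp₁ : (Walk.cons hu₁ (Walk.cons h₁c Walk.nil)).IsPath := by
    simp [Walk.isPath_def, hu₁.ne, huc, h₁c.ne]
  have hp₂ : (Walk.cons hu₂ (Walk.cons h₂c Walk.nil)).IsPath := by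
    simp [Walk.isPath_def, hu₂.ne, huc, h₂c.ne]
  have hpath : (⟨_, hp₁⟩ : G.Path u c) = ⟨_, hp₂⟩ := (hG.subsingleton_path u c).elim _ _
  simpa using congrArg (fun p : G.Path u c => p.val.support) hpath

lemma SimpleGraph.IsAcyclic.card_le_of_forall_adj {V : Type*} {G : SimpleGraph V}
    (hG : G.IsAcyclic) {C S : Finset V} {u : V} (hu : u ∉ C)
    (hS : ∀ v ∈ S, G.Adj u v ∧ ∃ c ∈ C, G.Adj v c) : #S ≤ #C := by
  refine card_le_card_of_forall_subsingleton G.Adj (fun v hv => (hS v hv).2) ?_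
  rintro c hc v₁ ⟨hv₁, h₁c⟩ v₂ ⟨hv₂, h₂c⟩
  exact hG.eq_of_adj_of_adj (ne_of_mem_of_not_mem hc hu).symm (hS v₁ hv₁).1 h₁c
    (hS v₂ hv₂).1 h₂c

lemma IsSpanningTree.isForest {n : ℕ} {E : Finset (Sym2 (Fin n))} (hE : IsSpanningTree E) :
    IsForest E :=
  ⟨hE.1, hE.2.isAcyclic⟩

lemma IsForest.card_le_of_forall_mem {n : ℕ} {E : Finset (Sym2 (Fin n))} (hE : IsForest E)
    {C S : Finset (Fin n)} {u : Fin n} (hu : u ∉ C)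
    (hS : ∀ v ∈ S, s(u, v) ∈ E ∧ ∃ c ∈ C, s(v, c) ∈ E) : #S ≤ #C := by
  have hadj {x y : Fin n} (hxy : s(x, y) ∈ E) :
      (SimpleGraph.fromEdgeSet (E : Set (Sym2 (Fin n)))).Adj x y :=
    (SimpleGraph.fromEdgeSet_adj _).mpr ⟨hxy, fun h => hE.1 _ hxy (Sym2.mk_isDiag_iff.mpr h)⟩
  refine hE.2.card_le_of_forall_adj hu fun v hv => ?_
  obtain ⟨huv, c, hc, hvc⟩ := hS v hv
  exact ⟨hadj huv, c, hc, hadj hvc⟩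

theorem rectangle_crossing_degree_bound_general (n m d : ℕ)
    (𝒜 ℬ : Set (Finset (Sym2 (Fin n)))) (hrect : IsRectangle 𝒜 ℬ)
    (A0 B0 : Finset (Sym2 (Fin n))) (hA0 : A0 ∈ 𝒜) (hB0 : B0 ∈ ℬ)
    (F0 : Finset (Sym2 (Fin n))) (C : Finset (Fin n)) (L : Fin n → Finset (Fin n))
    (hF0 : IsStarFactorOn m d F0 C L)
    (U V : Finset (Fin n))
    (hU : U = (Finset.univ \ C).filter (fun v => ∃ c ∈ C, s(v, c) ∈ A0))
    (hV : V = (Finset.univ \ C).filter (fun v => ∃ c ∈ C, s(v, c) ∈ B0)) :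
    (∀ A ∈ 𝒜, ∀ u ∈ U, (V.filter (fun v => s(u, v) ∈ A)).card ≤ m) ∧
    (∀ B ∈ ℬ, ∀ v ∈ V, (U.filter (fun u => s(u, v) ∈ B)).card ≤ m) := by
  obtain ⟨-, -, hAB⟩ := hrect
  rw [← hF0.1]
  subst hU hV
  simp only [mem_filter, mem_sdiff, mem_univ, true_and]
  refine ⟨fun A hA u hu => ?_, fun B hB v hv => ?_⟩
  · refine (hAB A hA B0 hB0).2.isForest.card_le_of_forall_mem hu.1 fun v hv => ?_
    simp only [mem_filter, mem_sdiff, mem_univ, true_and] at hv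
    obtain ⟨⟨-, c, hc, hvc⟩, huv⟩ := hv
    exact ⟨mem_union_left _ huv, c, hc, mem_union_right _ hvc⟩
  · refine (hAB A0 hA0 B hB).2.isForest.card_le_of_forall_mem hv.1 fun u hu => ?_
    simp only [mem_filter, mem_sdiff, mem_univ, true_and] at hu
    obtain ⟨⟨-, c, hc, huc⟩, huv⟩ := hu
    exact ⟨mem_union_right _ (Sym2.eq_swap ▸ huv), c, hc, mem_union_left _ huc⟩

/-- **Claim 1.** Let `ℛ = 𝒜 ∨ ℬ` be a rectangle in `K_n` and let
`T₀ = A₀ ∪ B₀` (`A₀ ∈ 𝒜`, `B₀ ∈ ℬ`) be a spanning star-tree with star centers `C`.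
With `U` (resp. `V`) the set of non-centers joined in `T₀` to a center by an edge
of `A₀` (resp. `B₀`): no forest `A ∈ 𝒜` has more than `m` edges joining a fixed `u ∈ U`
to `V`, and no forest `B ∈ ℬ` has more than `m` edges joining `U` to a fixed `v ∈ V`. -/
theorem rectangle_crossing_degree_bound (n m d : ℕ) (hm : 0 < m) (hd : 0 < d)
    (hn : (d + 1) * m = n)
    (𝒜 ℬ : Set (Finset (Sym2 (Fin n)))) (hrect : IsRectangle 𝒜 ℬ)
    (A0 B0 : Finset (Sym2 (Fin n))) (hA0 : A0 ∈ 𝒜) (hB0 : B0 ∈ ℬ)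
    (F0 P : Finset (Sym2 (Fin n))) (C : Finset (Fin n)) (L : Fin n → Finset (Fin n))
    (hF0 : IsStarFactorOn m d F0 C L) (hP : IsPathOn C P) (hFP : Disjoint F0 P)
    (hT0 : A0 ∪ B0 = F0 ∪ P)
    (U V : Finset (Fin n))
    (hU : U = (Finset.univ \ C).filter (fun v => ∃ c ∈ C, s(v, c) ∈ A0))
    (hV : V = (Finset.univ \ C).filter (fun v => ∃ c ∈ C, s(v, c) ∈ B0)) :
    (∀ A ∈ 𝒜, ∀ u ∈ U, (V.filter (fun v => s(u, v) ∈ A)).card ≤ m) ∧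
    (∀ B ∈ ℬ, ∀ v ∈ V, (U.filter (fun u => s(u, v) ∈ B)).card ≤ m) :=
  rectangle_crossing_degree_bound_general n m d 𝒜 ℬ hrect A0 B0 hA0 hB0 F0 C L hF0 U V hU hV
end

section
/- Let ℛ = 𝒜 ∨ ℬ be a rectangle in K_n containing a spanning star-tree T_0 = A_0 ∪ B_0 (A_0 ∈ 𝒜, B_0 ∈ ℬ) with star centers c_1, …, c_m; for each non-center vertex v let e_v denote the unique edge of T_0 joining v to a center, and set U = {v : e_v ∈ A_0} and V = {v : e_v ∈ B_0}. For a vertex z ∈ U let V_z = {v ∈ V : the edge {z, v} belongs to some forest A ∈ 𝒜}. Then for every star factor F ∈ ℱ_ℛ and every star center z of F with z ∈ U, the number of edges of F joining z to a vertex of V_z is at most m. -/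
open Finset

/-!
Let `F ⊆ A ∪ B` with `A ∈ 𝒜`, `B ∈ ℬ`. A counted edge `zv` lies in some member of `𝒜`, hence
not in `B`, hence in `A`; and each `v ∈ V` is joined to a center `c_v` by an edge of `B₀`. All
these edges live in the tree `A ∪ B₀`, where two distinct vertices (here `z ∉ C` and `c_v`) have
at most one common neighbour. So `v ↦ c_v` is injective and there are at most `|C| = m` such `v`.
-/

namespace SimpleGraph

variable {V : Type*} {G : SimpleGraph V}

theorem IsAcyclic.eq_of_adj_of_adj_s7 (hG : G.IsAcyclic) {u v x w : V} (huw : u ≠ w)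
    (huv : G.Adj u v) (hvw : G.Adj v w) (hux : G.Adj u x) (hxw : G.Adj x w) : v = x := by
  have hpath : ∀ {y} (h₁ : G.Adj u y) (h₂ : G.Adj y w),
      (Walk.cons h₁ (Walk.cons h₂ .nil)).IsPath := fun h₁ h₂ => by
    simp [Walk.cons_isPath_iff, h₁.ne, h₂.ne, huw]
  have hpq := (hG.subsingleton_path u w).elim ⟨_, hpath huv hvw⟩ ⟨_, hpath hux hxw⟩
  simp only [Subtype.mk.injEq, Walk.cons.injEq] at hpq
  exact hpq.1

theorem IsAcyclic.card_le_of_forall_exists_adj (hG : G.IsAcyclic) {z : V} {S C : Finset V}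
    (hzC : z ∉ C) (hS : ∀ v ∈ S, G.Adj z v) (hSC : ∀ v ∈ S, ∃ c ∈ C, G.Adj v c) :
    S.card ≤ C.card :=
  Finset.card_le_card_of_forall_subsingleton G.Adj hSC fun c hc _ hv _ hx =>
    hG.eq_of_adj_of_adj_s7 (by rintro rfl; exact hzC hc) (hS _ hv.1) hv.2 (hS _ hx.1) hx.2

end SimpleGraph

theorem ValidEdges.adj_fromEdgeSet {n : ℕ} {E : Finset (Sym2 (Fin n))} (hE : ValidEdges E)
    {a b : Fin n} (h : s(a, b) ∈ E) :
    (SimpleGraph.fromEdgeSet (E : Set (Sym2 (Fin n)))).Adj a b :=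
  (SimpleGraph.fromEdgeSet_adj _).2 ⟨h, fun hab => hE _ h (Sym2.mk_isDiag_iff.2 hab)⟩

theorem IsRectangle.mem_left_of_mem_union {n : ℕ} {𝒜 ℬ : Set (Finset (Sym2 (Fin n)))}
    (h : IsRectangle 𝒜 ℬ) {A A' B : Finset (Sym2 (Fin n))} (hA' : A' ∈ 𝒜)
    (hB : B ∈ ℬ) {e : Sym2 (Fin n)} (he : e ∈ A ∪ B) (he' : e ∈ A') : e ∈ A :=
  (mem_union.1 he).resolve_right (disjoint_left.1 (h.2.2 A' hA' B hB).1 he')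

open scoped Classical in
theorem covered_star_factor_center_bound_general (n m d : ℕ)
    (𝒜 ℬ : Set (Finset (Sym2 (Fin n)))) (hrect : IsRectangle 𝒜 ℬ)
    (A0 B0 : Finset (Sym2 (Fin n))) (hB0 : B0 ∈ ℬ)
    (F0 : Finset (Sym2 (Fin n))) (C : Finset (Fin n)) (L : Fin n → Finset (Fin n))
    (hF0 : IsStarFactorOn m d F0 C L)
    (U V : Finset (Fin n))
    (hU : U = (Finset.univ \ C).filter (fun v => ∃ c ∈ C, s(v, c) ∈ A0))
    (hV : V = (Finset.univ \ C).filter (fun v => ∃ c ∈ C, s(v, c) ∈ B0))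
    (F : Finset (Sym2 (Fin n)))
    (hcov : ∃ T ∈ rectFamily 𝒜 ℬ, F ⊆ T)
    (z : Fin n) (hzU : z ∈ U) :
    ((V.filter (fun v => (∃ A ∈ 𝒜, s(z, v) ∈ A))).filter
        (fun v => s(z, v) ∈ F)).card ≤ m := by
  obtain ⟨_, ⟨A, hA, B, hB, rfl⟩, hFT⟩ := hcov
  obtain ⟨hvalid, htree⟩ := (hrect.2.2 A hA B0 hB0).2
  have hzC : z ∉ C := by
    rw [hU, mem_filter, mem_sdiff] at hzU
    exact hzU.1.2
  refine hF0.1 ▸ htree.isAcyclic.card_le_of_forall_exists_adj hzC ?_ ?_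
  · intro v hv
    simp only [mem_filter] at hv
    obtain ⟨⟨-, A', hA', hzvA'⟩, hzvF⟩ := hv
    exact hvalid.adj_fromEdgeSet
      (mem_union_left _ (hrect.mem_left_of_mem_union hA' hB (hFT hzvF) hzvA'))
  · intro v hv
    simp only [hV, mem_filter] at hv
    obtain ⟨⟨⟨-, c, hc, hvc⟩, -⟩, -⟩ := hv
    exact ⟨c, hc, hvalid.adj_fromEdgeSet (mem_union_right _ hvc)⟩

open scoped Classical in
/-- **Claim 2.** Let `ℛ = 𝒜 ∨ ℬ` be a rectangle in `K_n` containing a spanning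
star-tree `T₀ = A₀ ∪ B₀` (`A₀ ∈ 𝒜`, `B₀ ∈ ℬ`) with star centers `C`; let `U`, `V` be the sets
of non-centers joined in `T₀` to a center by an edge of `A₀` resp. `B₀`. For `z ∈ U` let
`V_z = {v ∈ V : s(z,v) belongs to some A ∈ 𝒜}`. Then for every star factor `F` covered by
`ℛ` and every star center `z` of `F` with `z ∈ U`, the number of edges of `F` joining `z`
to a vertex of `V_z` is at most `m`. -/
theorem covered_star_factor_center_bound (n m d : ℕ) (hm : 0 < m) (hd : 0 < d)
    (hn : (d + 1) * m = n)
    (𝒜 ℬ : Set (Finset (Sym2 (Fin n)))) (hrect : IsRectangle 𝒜 ℬ)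
    (A0 B0 : Finset (Sym2 (Fin n))) (hA0 : A0 ∈ 𝒜) (hB0 : B0 ∈ ℬ)
    (F0 P : Finset (Sym2 (Fin n))) (C : Finset (Fin n)) (L : Fin n → Finset (Fin n))
    (hF0 : IsStarFactorOn m d F0 C L) (hP : IsPathOn C P) (hFP : Disjoint F0 P)
    (hT0 : A0 ∪ B0 = F0 ∪ P)
    (U V : Finset (Fin n))
    (hU : U = (Finset.univ \ C).filter (fun v => ∃ c ∈ C, s(v, c) ∈ A0))
    (hV : V = (Finset.univ \ C).filter (fun v => ∃ c ∈ C, s(v, c) ∈ B0))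
    (F : Finset (Sym2 (Fin n))) (hF : IsStarFactor m d F)
    (hcov : ∃ T ∈ rectFamily 𝒜 ℬ, F ⊆ T)
    (z : Fin n) (hzU : z ∈ U) (hz : IsCenterOf d F z) :
    ((V.filter (fun v => (∃ A ∈ 𝒜, s(z, v) ∈ A))).filter
        (fun v => s(z, v) ∈ F)).card ≤ m :=
  covered_star_factor_center_bound_general n m d 𝒜 ℬ hrect A0 B0 hB0 F0 C L hF0 U V hU hV F hcov z
    hzU
end

section
/- Let B_0 be an edge set on a finite vertex set in which every vertex of a set L is joined by an edge of B_0 to one of m fixed vertices c_1, …, c_m, where c_1, …, c_m ∉ L. If A is an edge set such that the graph with edge set A ∪ B_0 is acyclic, then every vertex u ∉ L ∪ {c_1, …, c_m} is joined by edges of A to at most m vertices of L. -/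
open Finset

/-!
Every `v ∈ L` adjacent to `u` through `A` is joined through `B₀` to some `c ∈ C`, so `u – v – c`
is a path of length two in the forest `A ∪ B₀`. Two such `v` with the same `c` would close a
4-cycle `u – v – c – v' – u`; hence `v ↦ c` is injective and there are at most `|C|` of them.
-/

namespace SimpleGraph

theorem IsAcyclic.commonNeighbors_subsingleton {V : Type*} {G : SimpleGraph V}
    (hG : G.IsAcyclic) {u w : V} (huw : u ≠ w) : (G.commonNeighbors u w).Subsingleton := by
  intro v hv v' hv'
  rw [mem_commonNeighbors] at hv hv'
  let path {x : V} (hux : G.Adj u x) (hxw : G.Adj w x) : G.Path u w :=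
    ⟨.cons hux (.cons hxw.symm .nil), by
      simp [Walk.isPath_def, hux.ne, hxw.ne', huw]⟩
  exact congrArg (fun p : G.Path u w => p.1.snd) ((hG.subsingleton_path u w).elim
    (path hv.1 hv.2) (path hv'.1 hv'.2))

end SimpleGraph

theorem acyclic_union_degree_bound_general {α : Type*} [DecidableEq α]
    (B0 A : Finset (Sym2 α)) (L C : Finset α) (hLC : Disjoint L C)
    (hB0 : ∀ v ∈ L, ∃ c ∈ C, s(v, c) ∈ B0)
    (hacyc : (SimpleGraph.fromEdgeSet ((A ∪ B0 : Finset (Sym2 α)) : Set (Sym2 α))).IsAcyclic) :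
    ∀ u : α, u ∉ L → u ∉ C → (L.filter (fun v => s(u, v) ∈ A)).card ≤ C.card := by
  intro u huL huC
  refine card_le_card_of_forall_subsingleton (fun v c => s(v, c) ∈ B0)
    (fun v hv => hB0 v (mem_filter.mp hv).1) fun c hc => ?_
  refine (hacyc.commonNeighbors_subsingleton (ne_of_mem_of_not_mem hc huC).symm).anti ?_
  rintro v ⟨hv, hvc⟩
  obtain ⟨hvL, huv⟩ := mem_filter.mp hv
  simp only [SimpleGraph.mem_commonNeighbors, SimpleGraph.fromEdgeSet_adj, coe_union,
    Set.mem_union, mem_coe]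
  exact ⟨⟨.inl huv, (ne_of_mem_of_not_mem hvL huL).symm⟩,
    ⟨.inr (Sym2.eq_swap ▸ hvc), fun hcv => disjoint_left.mp hLC hvL (hcv ▸ hc)⟩⟩

/-- Let `B₀` be an edge set on a finite vertex set in which every vertex of
a set `L` is joined by an edge of `B₀` to one of the vertices of a set `C` (of `m = |C|`
vertices), where `C` is disjoint from `L`. If `A` is an edge set such that the graph with
edge set `A ∪ B₀` is acyclic, then every vertex `u ∉ L ∪ C` is joined by edges of `A` to at
most `m = |C|` vertices of `L`. -/
theorem acyclic_union_degree_bound {α : Type*} [Fintype α] [DecidableEq α]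
    (B0 A : Finset (Sym2 α)) (L C : Finset α) (hLC : Disjoint L C)
    (hB0 : ∀ v ∈ L, ∃ c ∈ C, s(v, c) ∈ B0)
    (hacyc : (SimpleGraph.fromEdgeSet ((A ∪ B0 : Finset (Sym2 α)) : Set (Sym2 α))).IsAcyclic) :
    ∀ u : α, u ∉ L → u ∉ C → (L.filter (fun v => s(u, v) ∈ A)).card ≤ C.card :=
  acyclic_union_degree_bound_general B0 A L C hLC hB0 hacyc
end

section
/- For all integers a, b, x with 0 ≤ b, 0 ≤ x and b + x < a, the following inequalities hold: ((a−b−x)/(a−x))^x ≤ C(a−x, b)/C(a, b) ≤ ((a−b)/a)^x, where C(·,·) denotes the binomial coefficient. -/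
/-!
Writing `n = a - x`, the ratio `C(n, b) / C(n + x, b)` telescopes into the product of the factors
`C(m - 1, b) / C(m, b) = (m - b) / m` for `m = n + 1, …, n + x`. Since `m ↦ (m - b) / m` is
increasing, every factor lies between `(n - b) / n` and `(n + x - b) / (n + x)`.
-/

open Finset

theorem Nat.cast_choose_mul_succ {R : Type*} [CommRing R] (n k : ℕ) :
    (n.choose k : R) * (n + 1) = ((n + 1).choose k : R) * (n + 1 - k) := by
  rcases le_or_gt k (n + 1) with hk | hk
  · have key := congrArg (Nat.cast : ℕ → R) (Nat.choose_mul_succ_eq n k)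
    push_cast [Nat.cast_sub hk] at key
    exact key
  · simp [Nat.choose_eq_zero_of_lt hk, Nat.choose_eq_zero_of_lt (Nat.lt_of_succ_lt hk)]

theorem Nat.cast_choose_div_choose_add {K : Type*} [Field K] [CharZero K] {n b : ℕ} (hb : b ≤ n)
    (x : ℕ) :
    (n.choose b : K) / ((n + x).choose b) = ∏ i ∈ range x, ((n + i + 1 - b : K) / (n + i + 1)) := by
  induction x with
  | zero => simp [(Nat.choose_pos hb).ne']
  | succ x ih =>
    have hx : ((n + x).choose b : K) ≠ 0 := by exact_mod_cast (Nat.choose_pos (by omega)).ne'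
    have hx' : ((n + x + 1).choose b : K) ≠ 0 := by exact_mod_cast (Nat.choose_pos (by omega)).ne'
    have hm : (n + x + 1 : K) ≠ 0 := by exact_mod_cast (n + x).succ_ne_zero
    have key := Nat.cast_choose_mul_succ (R := K) (n + x) b
    rw [prod_range_succ, ← ih, ← add_assoc]
    push_cast at key ⊢
    field_simp
    linear_combination (n.choose b : K) * key

theorem sub_div_self_le_sub_div_self {K : Type*} [Field K] [LinearOrder K] [IsStrictOrderedRing K]
    {c m m' : K} (hc : 0 ≤ c) (hm : 0 < m) (hmm' : m ≤ m') : (m - c) / m ≤ (m' - c) / m' := by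
  rw [sub_div, sub_div, div_self hm.ne', div_self (hm.trans_le hmm').ne']
  exact sub_le_sub_left (div_le_div_of_nonneg_left hc hm hmm') 1

/-- For all integers `a, b, x ≥ 0` with `b + x < a`:
`((a−b−x)/(a−x))^x ≤ C(a−x, b)/C(a, b) ≤ ((a−b)/a)^x`. -/
theorem choose_ratio_bounds (a b x : ℕ) (h : b + x < a) :
    (((a : ℝ) - b - x) / ((a : ℝ) - x)) ^ x ≤ ((a - x).choose b : ℝ) / (a.choose b : ℝ) ∧
    ((a - x).choose b : ℝ) / (a.choose b : ℝ) ≤ (((a : ℝ) - b) / (a : ℝ)) ^ x := by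
  obtain ⟨n, rfl⟩ : ∃ n, a = n + x := ⟨a - x, by omega⟩
  have hbn : b < n := by omega
  have hn : (0 : ℝ) < n := Nat.cast_pos.2 (by omega)
  have hbn' : (b : ℝ) ≤ n := by exact_mod_cast hbn.le
  have hb : (0 : ℝ) ≤ b := b.cast_nonneg
  set f : ℝ → ℝ := fun m ↦ (m - b) / m
  have hf_bounds : ∀ i ∈ range x, f n ≤ f (n + i + 1) ∧ f (n + i + 1) ≤ f (n + x) := fun i hi ↦
    ⟨sub_div_self_le_sub_div_self hb hn (by linarith [i.cast_nonneg (α := ℝ)]),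
      sub_div_self_le_sub_div_self hb (by positivity)
        (by exact_mod_cast Nat.succ_le_of_lt (by simpa using hi))⟩
  have hf_nonneg : 0 ≤ f n := div_nonneg (sub_nonneg.2 hbn') hn.le
  have hratio : ((n + x - x).choose b : ℝ) / ((n + x).choose b) = ∏ i ∈ range x, f (n + i + 1) := by
    rw [Nat.add_sub_cancel]
    exact Nat.cast_choose_div_choose_add hbn.le x
  push_cast
  rw [hratio, add_sub_cancel_right, sub_right_comm, add_sub_cancel_right]
  constructor
  · simpa using prod_le_prod (fun _ _ ↦ hf_nonneg) (fun i hi ↦ (hf_bounds i hi).1)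
  · simpa using prod_le_prod (fun i hi ↦ hf_nonneg.trans (hf_bounds i hi).1) (fun i hi ↦ (hf_bounds i hi).2)
end

section
/- Let m, d be positive integers, n = (d+1)·m, and let S ⊆ [n] be a set of s vertices. Then the number of star factors of K_n having no star center in S is at most |ℱ| · e^{−s·m/n}, where |ℱ| is the total number of star factors of K_n. -/
/-!
Relabelling vertices by a permutation preserves star factors and moves star centers along, so
among the star factors avoiding `S` as centers, every vertex outside `S` is a center of equally
many of them. Each such factor has `m` centers, all outside `S`, so double counting shows that a
fixed vertex `a ∉ S` is a center of at least an `m / n` fraction of them. Forbidding `a` as well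
therefore shrinks the count by a factor `1 - m / n ≤ e^{-m/n}`; induct on `S`.
-/

open Finset

section StarFactor

variable {n m d : ℕ}

def permEdges (σ : Equiv.Perm (Fin n)) (F : Finset (Sym2 (Fin n))) : Finset (Sym2 (Fin n)) :=
  F.image (Sym2.map σ)

@[simp]
lemma permEdges_symm_permEdges (σ : Equiv.Perm (Fin n)) (F : Finset (Sym2 (Fin n))) :
    permEdges σ.symm (permEdges σ F) = F := by
  simp only [permEdges, image_image, ← Sym2.map_comp, Equiv.symm_comp_self, Sym2.map_id, image_id]

lemma permEdges_injective (σ : Equiv.Perm (Fin n)) : Function.Injective (permEdges σ) :=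
  Function.LeftInverse.injective (permEdges_symm_permEdges σ)

lemma permEdges_star (σ : Equiv.Perm (Fin n)) (z : Fin n) (L : Finset (Fin n)) :
    permEdges σ (L.image fun v => s(z, v)) = (L.image σ).image fun v => s(σ z, v) := by
  simp only [permEdges, image_image]
  rfl

lemma IsStar.permEdges (σ : Equiv.Perm (Fin n)) {S : Finset (Sym2 (Fin n))} {z : Fin n}
    (h : IsStar d S z) : IsStar d (permEdges σ S) (σ z) := by
  obtain ⟨L, hzL, rfl, rfl⟩ := h
  exact ⟨L.image σ, by simpa using hzL, card_image_of_injective _ σ.injective,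
    permEdges_star σ z L⟩

lemma IsCenterOf.permEdges (σ : Equiv.Perm (Fin n)) {F : Finset (Sym2 (Fin n))} {z : Fin n}
    (h : IsCenterOf d F z) : IsCenterOf d (permEdges σ F) (σ z) := by
  obtain ⟨S, hSF, hS⟩ := h
  exact ⟨_, image_subset_image hSF, hS.permEdges σ⟩

lemma isCenterOf_permEdges_iff (σ : Equiv.Perm (Fin n)) {F : Finset (Sym2 (Fin n))}
    {z : Fin n} : IsCenterOf d (permEdges σ F) z ↔ IsCenterOf d F (σ.symm z) := by
  refine ⟨fun h => ?_, fun h => ?_⟩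
  · simpa using h.permEdges σ.symm
  · simpa using h.permEdges σ

lemma IsStarFactor.permEdges (σ : Equiv.Perm (Fin n)) {F : Finset (Sym2 (Fin n))}
    (h : IsStarFactor m d F) : IsStarFactor m d (permEdges σ F) := by
  obtain ⟨C, L, hC, hL, hdisj, huniv, rfl⟩ := h
  have hL' : ∀ c ∈ C, insert (σ c) ((L c).image σ) = (insert c (L c)).image σ := by
    simp [image_insert]
  refine ⟨C.image σ, fun z => (L (σ.symm z)).image σ, ?_, ?_, ?_, ?_, ?_⟩
  · rw [card_image_of_injective _ σ.injective, hC]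
  · simp only [mem_image, forall_exists_index, and_imp, forall_apply_eq_imp_iff₂,
      Equiv.symm_apply_apply, EmbeddingLike.apply_eq_iff_eq, exists_eq_right,
      card_image_of_injective _ σ.injective]
    exact hL
  · simp only [mem_image, forall_exists_index, and_imp, forall_apply_eq_imp_iff₂,
      Equiv.symm_apply_apply]
    intro c hc c' hc' hne
    rw [hL' c hc, hL' c' hc', disjoint_image σ.injective]
    exact hdisj c hc c' hc' (fun h => hne (congrArg σ h))
  · simp only [image_biUnion, Equiv.symm_apply_apply]
    rw [biUnion_congr rfl hL', ← biUnion_image, huniv]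
    exact image_univ_equiv σ
  · rw [_root_.permEdges, biUnion_image, image_biUnion]
    refine biUnion_congr rfl fun c _ => ?_
    simp only [Equiv.symm_apply_apply]
    exact permEdges_star σ c (L c)

lemma IsStarFactorOn.isCenterOf {F : Finset (Sym2 (Fin n))} {C : Finset (Fin n)}
    {L : Fin n → Finset (Fin n)} (h : IsStarFactorOn m d F C L) {z : Fin n} (hz : z ∈ C) :
    IsCenterOf d F z := by
  obtain ⟨-, hL, -, -, rfl⟩ := h
  exact ⟨_, subset_biUnion_of_mem (fun z => (L z).image fun v => s(z, v)) hz,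
    L z, (hL z hz).1, (hL z hz).2, rfl⟩

section Avoiding

open scoped Classical

noncomputable def avoidingFactors (m d : ℕ) (S : Finset (Fin n)) :
    Finset (Finset (Sym2 (Fin n))) :=
  {F | IsStarFactor m d F ∧ ∀ z ∈ S, ¬ IsCenterOf d F z}

lemma mem_avoidingFactors {S : Finset (Fin n)} {F : Finset (Sym2 (Fin n))} :
    F ∈ avoidingFactors m d S ↔ IsStarFactor m d F ∧ ∀ z ∈ S, ¬ IsCenterOf d F z := by
  simp [avoidingFactors]

lemma avoidingFactors_insert (S : Finset (Fin n)) (a : Fin n) :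
    avoidingFactors m d (insert a S) = {F ∈ avoidingFactors m d S | ¬ IsCenterOf d F a} := by
  ext F
  simp only [mem_filter, mem_avoidingFactors, forall_mem_insert]
  tauto

lemma le_card_filter_isCenterOf {S : Finset (Fin n)} {F : Finset (Sym2 (Fin n))}
    (hF : F ∈ avoidingFactors m d S) : m ≤ #{w ∈ univ \ S | IsCenterOf d F w} := by
  obtain ⟨⟨C, L, hon⟩, havoid⟩ := mem_avoidingFactors.mp hF
  rw [← hon.1]
  refine card_le_card fun z hz => ?_
  have hcenter := hon.isCenterOf hz
  simpa [hcenter] using fun hzS => havoid z hzS hcenter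

/-- The transposition of `w` and `w'` carries the factors centered at `w` to those centered
at `w'`, and fixes `S` pointwise. -/
lemma card_filter_isCenterOf_le {S : Finset (Fin n)} {w w' : Fin n} (hw : w ∉ S) (hw' : w' ∉ S) :
    #{F ∈ avoidingFactors m d S | IsCenterOf d F w}
      ≤ #{F ∈ avoidingFactors m d S | IsCenterOf d F w'} := by
  refine card_le_card_of_injOn (permEdges (Equiv.swap w w'))
    (fun F hF => ?_) (permEdges_injective _).injOn
  simp only [coe_filter, Set.mem_ofPred_eq, mem_avoidingFactors, isCenterOf_permEdges_iff,
    Equiv.symm_swap, Equiv.swap_apply_right] at hF ⊢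
  obtain ⟨⟨hfactor, havoid⟩, hcenter⟩ := hF
  refine ⟨⟨hfactor.permEdges _, fun z hz => ?_⟩, hcenter⟩
  rw [Equiv.swap_apply_of_ne_of_ne (by rintro rfl; exact hw hz) (by rintro rfl; exact hw' hz)]
  exact havoid z hz

lemma card_avoidingFactors_mul_le {S : Finset (Fin n)} {a : Fin n} (ha : a ∉ S) :
    #(avoidingFactors m d S) * m ≤ n * #{F ∈ avoidingFactors m d S | IsCenterOf d F a} :=
  calc #(avoidingFactors m d S) * m
      ≤ #(univ \ S) * #{F ∈ avoidingFactors m d S | IsCenterOf d F a} :=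
        card_mul_le_card_mul (fun F w => IsCenterOf d F w)
          (fun _ hF => le_card_filter_isCenterOf hF)
          (fun _ hw => card_filter_isCenterOf_le (mem_sdiff.mp hw).2 ha)
    _ ≤ n * #{F ∈ avoidingFactors m d S | IsCenterOf d F a} := by
        gcongr
        simpa using card_le_univ (univ \ S)

lemma card_avoidingFactors_insert_le {S : Finset (Fin n)} {a : Fin n} (ha : a ∉ S) :
    (#(avoidingFactors m d (insert a S)) : ℝ)
      ≤ Real.exp (-(m / n : ℝ)) * #(avoidingFactors m d S) := by
  have hn : (0 : ℝ) < n := by exact_mod_cast a.pos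
  have hsplit : (#{F ∈ avoidingFactors m d S | IsCenterOf d F a} : ℝ)
      = #(avoidingFactors m d S) - #(avoidingFactors m d (insert a S)) := by
    rw [eq_sub_iff_add_eq, avoidingFactors_insert]
    exact_mod_cast card_filter_add_card_filter_not _
  have hdouble : (#(avoidingFactors m d S) : ℝ) * m
      ≤ n * (#(avoidingFactors m d S) - #(avoidingFactors m d (insert a S))) := by
    rw [← hsplit]
    exact_mod_cast card_avoidingFactors_mul_le ha
  have hfraction : (m / n : ℝ) * #(avoidingFactors m d S)
      ≤ #(avoidingFactors m d S) - #(avoidingFactors m d (insert a S)) := by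
    rw [div_mul_eq_mul_div, div_le_iff₀ hn]
    linarith
  calc (#(avoidingFactors m d (insert a S)) : ℝ)
      ≤ (-(m / n : ℝ) + 1) * #(avoidingFactors m d S) := by linarith
    _ ≤ Real.exp (-(m / n : ℝ)) * #(avoidingFactors m d S) := by
        gcongr
        exact Real.add_one_le_exp _

lemma card_avoidingFactors_le (S : Finset (Fin n)) :
    (#(avoidingFactors m d S) : ℝ)
      ≤ #(avoidingFactors m d (∅ : Finset (Fin n))) * Real.exp (-(#S * m / n : ℝ)) := by
  induction S using Finset.induction_on with
  | empty => simp
  | insert a S ha ih =>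
    calc (#(avoidingFactors m d (insert a S)) : ℝ)
        ≤ Real.exp (-(m / n : ℝ)) * #(avoidingFactors m d S) :=
          card_avoidingFactors_insert_le ha
      _ ≤ Real.exp (-(m / n : ℝ)) *
            (#(avoidingFactors m d (∅ : Finset (Fin n))) * Real.exp (-(#S * m / n : ℝ))) := by
          gcongr
      _ = #(avoidingFactors m d (∅ : Finset (Fin n))) *
            Real.exp (-(#(insert a S) * m / n : ℝ)) := by
          rw [card_insert_of_notMem ha, mul_left_comm, ← Real.exp_add]
          push_cast
          ring_nf

lemma ncard_eq_card_avoidingFactors (S : Finset (Fin n)) :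
    {F : Finset (Sym2 (Fin n)) | IsStarFactor m d F ∧ ∀ z ∈ S, ¬ IsCenterOf d F z}.ncard
      = #(avoidingFactors m d S) := by
  rw [Set.ncard_eq_toFinset_card', Set.toFinset_ofPred, avoidingFactors]

end Avoiding

end StarFactor

theorem star_factors_avoiding_centers_bound_general (m d : ℕ)
    (n : ℕ) (S : Finset (Fin n)) :
    (({F : Finset (Sym2 (Fin n)) |
        IsStarFactor m d F ∧ ∀ z ∈ S, ¬ IsCenterOf d F z}).ncard : ℝ) ≤
      ({F : Finset (Sym2 (Fin n)) | IsStarFactor m d F}.ncard : ℝ) *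
        Real.exp (-((S.card : ℝ) * m / n)) := by
  have h := card_avoidingFactors_le (m := m) (d := d) S
  rw [← ncard_eq_card_avoidingFactors, ← ncard_eq_card_avoidingFactors] at h
  simpa using h

/-- Let `m, d` be positive integers, `n = (d+1)·m`, and `S ⊆ [n]` a set of
`s` vertices. The number of star factors of `K_n` having no star center in `S` is at most
`|ℱ| · e^(−s·m/n)`. -/
theorem star_factors_avoiding_centers_bound (m d : ℕ) (hm : 0 < m) (hd : 0 < d)
    (n : ℕ) (hn : n = (d + 1) * m) (S : Finset (Fin n)) :
    (({F : Finset (Sym2 (Fin n)) |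
        IsStarFactor m d F ∧ ∀ z ∈ S, ¬ IsCenterOf d F z}).ncard : ℝ) ≤
      ({F : Finset (Sym2 (Fin n)) | IsStarFactor m d F}.ncard : ℝ) *
        Real.exp (-((S.card : ℝ) * m / n)) :=
  star_factors_avoiding_centers_bound_general m d n S
end

section
/- Let n ≥ 1, K, d be integers with 0 ≤ K ≤ n and 0 ≤ d ≤ n, let ε > 0 be a real number, and let m ≥ 0 be an integer with m ≤ (K/n − ε)·d. Then Σ_{i=0}^{m} C(K, i)·C(n−K, d−i) / C(n, d) ≤ e^{−2·ε²·d}. -/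
/-!
Let `W = n - K` be the number of black balls and `J = d - i` the number of black balls drawn.
Chernoff: for `s ≥ 0`, `P(i ≤ m) ≤ e^{-s(d-m)} E[e^{sJ}]`. Hoeffding's comparison with drawing
with replacement bounds the moment generating function: the factorial moments
`E[C(J,t)] = C(d,t) C(W,t) / C(n,t)` are at most the binomial ones `C(d,t) q^t`, `q = W/n`, so
`E[(1+x)^J] ≤ (1+qx)^d` for `x ≥ 0`. Hoeffding's lemma for a Bernoulli variable,
`1 - q + q e^s ≤ e^{qs + s²/8}`, and the choice `s = 4ε` finish.
-/

open Real Finset MeasureTheory ProbabilityTheory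

theorem one_sub_add_mul_exp_le_exp {q : ℝ} (hq₀ : 0 ≤ q) (hq₁ : q ≤ 1) (t : ℝ) :
    1 - q + q * exp t ≤ exp (q * t + t ^ 2 / 8) := by
  set μ : Measure ℝ := Ber(1, 0, ⟨q, hq₀, hq₁⟩)
  have hμ : ∀ᵐ x ∂μ, id x ∈ Set.Icc (0 : ℝ) 1 := by
    simp only [μ, bernoulliMeasure_def, ae_add_measure_iff]
    constructor <;> exact Measure.ae_smul_measure (by simp) _
  have hmgf := (hasSubgaussianMGF_of_mem_Icc measurable_id.aemeasurable hμ).mgf_le t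
  norm_num [mgf, integral_bernoulliMeasure, μ] at hmgf
  calc 1 - q + q * exp t = exp (q * t) * (q * exp (t * (1 - q)) + (1 - q) * exp (-(t * q))) := by
        rw [mul_one_sub, exp_sub, mul_comm t q, exp_neg]
        field_simp
        ring
    _ ≤ exp (q * t) * exp (t ^ 2 / 8) := by
        gcongr
        exact hmgf.trans_eq (by ring_nf)
    _ = exp (q * t + t ^ 2 / 8) := (exp_add _ _).symm

theorem one_add_pow_eq_sum_range_of_le {R : Type*} [CommSemiring R] (x : R) {j d : ℕ}
    (hjd : j ≤ d) : (1 + x) ^ j = ∑ t ∈ range (d + 1), x ^ t * j.choose t := by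
  rw [add_comm, add_pow]
  simp only [one_pow, mul_one]
  refine sum_subset (range_subset_range.2 (by omega)) fun t _ ht => ?_
  rw [Nat.choose_eq_zero_of_lt (by simpa using ht), Nat.cast_zero, mul_zero]

namespace Nat

theorem descFactorial_mul_pow_le {W n : ℕ} (h : W ≤ n) :
    ∀ t, W.descFactorial t * n ^ t ≤ n.descFactorial t * W ^ t
  | 0 => by simp
  | t + 1 => by
    have hstep : (W - t) * n ≤ (n - t) * W := by
      rw [Nat.sub_mul, Nat.sub_mul, Nat.mul_comm n W]
      exact Nat.sub_le_sub_left (Nat.mul_le_mul_left t h) _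
    calc W.descFactorial (t + 1) * n ^ (t + 1)
        = (W - t) * n * (W.descFactorial t * n ^ t) := by rw [descFactorial_succ]; ring
      _ ≤ (n - t) * W * (n.descFactorial t * W ^ t) :=
          Nat.mul_le_mul hstep (descFactorial_mul_pow_le h t)
      _ = n.descFactorial (t + 1) * W ^ (t + 1) := by rw [descFactorial_succ]; ring

theorem choose_mul_pow_le {W n : ℕ} (h : W ≤ n) (t : ℕ) :
    W.choose t * n ^ t ≤ n.choose t * W ^ t := by
  have := descFactorial_mul_pow_le h t
  rw [descFactorial_eq_factorial_mul_choose, descFactorial_eq_factorial_mul_choose,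
    Nat.mul_assoc, Nat.mul_assoc] at this
  exact Nat.le_of_mul_le_mul_left this (factorial_pos t)

theorem cast_choose_le_choose_mul_div_pow {W n : ℕ} (h : W ≤ n) (t : ℕ) :
    (W.choose t : ℝ) ≤ n.choose t * ((W : ℝ) / n) ^ t := by
  rcases Nat.eq_zero_or_pos n with rfl | hn
  · obtain rfl := Nat.le_zero.1 h
    cases t <;> simp
  rw [div_pow, mul_div_assoc', le_div_iff₀ (by positivity)]
  exact_mod_cast choose_mul_pow_le h t

theorem sum_range_choose_mul_choose_mul_choose (W K d : ℕ) {t : ℕ} (htd : t ≤ d) :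
    ∑ j ∈ range (d + 1), W.choose j * j.choose t * K.choose (d - j) =
      W.choose t * (W - t + K).choose (d - t) := by
  obtain ⟨s, rfl⟩ := Nat.exists_eq_add_of_le htd
  rw [Nat.add_assoc, sum_range_add, sum_eq_zero fun j hj => by
      rw [choose_eq_zero_of_lt (mem_range.1 hj), mul_zero, zero_mul], zero_add,
    Nat.add_sub_cancel_left, add_choose_eq, Finset.Nat.sum_antidiagonal_eq_sum_range_succ_mk,
    mul_sum]
  refine sum_congr rfl fun u _ => ?_
  rw [choose_mul (Nat.le_add_right t u), Nat.add_sub_cancel_left, Nat.add_sub_add_left,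
    Nat.mul_assoc]

end Nat

theorem choose_mul_choose_sub_add_le (W K : ℕ) {d t : ℕ} (htd : t ≤ d) :
    (W.choose t * (W - t + K).choose (d - t) : ℝ) ≤
      (W + K).choose d * d.choose t * ((W : ℝ) / (W + K)) ^ t := by
  rcases lt_or_ge W t with htW | htW
  · rw [Nat.choose_eq_zero_of_lt htW, Nat.cast_zero, zero_mul]
    positivity
  have hsub : W - t + K = W + K - t := by omega
  have hid : ((W + K).choose d * d.choose t : ℝ) = (W + K).choose t * (W + K - t).choose (d - t) :=
    by exact_mod_cast Nat.choose_mul htd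
  calc (W.choose t * (W - t + K).choose (d - t) : ℝ)
      ≤ (W + K).choose t * ((W : ℝ) / (W + K)) ^ t * (W + K - t).choose (d - t) := by
        rw [hsub]
        gcongr
        exact_mod_cast Nat.cast_choose_le_choose_mul_div_pow (Nat.le_add_right W K) t
    _ = (W + K).choose d * d.choose t * ((W : ℝ) / (W + K)) ^ t := by
        rw [hid]
        ring

theorem sum_range_choose_mul_choose_mul_one_add_pow_le (W K d : ℕ) {x : ℝ} (hx : 0 ≤ x) :
    ∑ j ∈ range (d + 1), (W.choose j * K.choose (d - j) : ℝ) * (1 + x) ^ j ≤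
      (W + K).choose d * (1 + (W : ℝ) / (W + K) * x) ^ d := by
  calc ∑ j ∈ range (d + 1), (W.choose j * K.choose (d - j) : ℝ) * (1 + x) ^ j
      = ∑ t ∈ range (d + 1), x ^ t *
          ((∑ j ∈ range (d + 1), W.choose j * j.choose t * K.choose (d - j) : ℕ) : ℝ) := by
        simp_rw [Nat.cast_sum, mul_sum]
        rw [sum_comm]
        refine sum_congr rfl fun j hj => ?_
        rw [one_add_pow_eq_sum_range_of_le x (mem_range_succ_iff.1 hj), mul_sum]
        refine sum_congr rfl fun t _ => ?_
        push_cast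
        ring
    _ = ∑ t ∈ range (d + 1), x ^ t * (W.choose t * (W - t + K).choose (d - t) : ℝ) := by
        refine sum_congr rfl fun t ht => ?_
        rw [Nat.sum_range_choose_mul_choose_mul_choose W K d (mem_range_succ_iff.1 ht)]
        push_cast
        rfl
    _ ≤ ∑ t ∈ range (d + 1), x ^ t *
          ((W + K).choose d * d.choose t * ((W : ℝ) / (W + K)) ^ t) := by
        refine sum_le_sum fun t ht => ?_
        exact mul_le_mul_of_nonneg_left
          (choose_mul_choose_sub_add_le W K (mem_range_succ_iff.1 ht)) (by positivity)
    _ = (W + K).choose d * (1 + (W : ℝ) / (W + K) * x) ^ d := by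
        rw [add_comm 1, add_pow, mul_sum]
        refine sum_congr rfl fun t _ => ?_
        ring

theorem sum_range_choose_mul_choose_mul_pow_le (K W : ℕ) {d m : ℕ} (hmd : m ≤ d) {y : ℝ}
    (hy : 1 ≤ y) :
    (∑ i ∈ range (m + 1), (K.choose i * W.choose (d - i) : ℝ)) * y ^ (d - m) ≤
      ∑ j ∈ range (d + 1), (W.choose j * K.choose (d - j) : ℝ) * y ^ j := by
  rw [sum_mul]
  calc ∑ i ∈ range (m + 1), (K.choose i * W.choose (d - i) : ℝ) * y ^ (d - m)
      ≤ ∑ i ∈ range (m + 1), (K.choose i * W.choose (d - i) : ℝ) * y ^ (d - i) := by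
        gcongr with i hi
        exact mem_range_succ_iff.1 hi
    _ ≤ ∑ i ∈ range (d + 1), (K.choose i * W.choose (d - i) : ℝ) * y ^ (d - i) :=
        sum_le_sum_of_subset_of_nonneg (range_subset_range.2 (by omega))
          fun _ _ _ => by positivity
    _ = ∑ j ∈ range (d + 1), (W.choose j * K.choose (d - j) : ℝ) * y ^ j := by
        rw [← sum_range_reflect]
        refine sum_congr rfl fun i hi => ?_
        have := mem_range.1 hi
        rw [show d + 1 - 1 - i = d - i by omega, show d - (d - i) = i by omega]
        ring

theorem sum_range_choose_mul_choose_le_mul_exp (K W : ℕ) {d m : ℕ} (hmd : m ≤ d) {s : ℝ}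
    (hs : 0 ≤ s) :
    ∑ i ∈ range (m + 1), (K.choose i * W.choose (d - i) : ℝ) ≤
      (W + K).choose d * exp (d * ((W : ℝ) / (W + K) * s + s ^ 2 / 8) - s * (d - m)) := by
  set q : ℝ := (W : ℝ) / (W + K)
  have hq₀ : 0 ≤ q := by positivity
  have hq₁ : q ≤ 1 := div_le_one_of_le₀ (by simp) (by positivity)
  have hy : 1 ≤ exp s := one_le_exp hs
  have hmgf := sum_range_choose_mul_choose_mul_one_add_pow_le W K d (sub_nonneg.2 hy)
  rw [add_sub_cancel] at hmgf
  have hber : 1 + q * (exp s - 1) ≤ exp (q * s + s ^ 2 / 8) := by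
    linarith [one_sub_add_mul_exp_le_exp hq₀ hq₁ s]
  rw [show (d : ℝ) - m = ((d - m : ℕ) : ℝ) by push_cast [hmd]; ring, exp_sub, exp_nat_mul,
    mul_comm s, exp_nat_mul, mul_div_assoc', le_div_iff₀ (by positivity)]
  calc (∑ i ∈ range (m + 1), (K.choose i * W.choose (d - i) : ℝ)) * exp s ^ (d - m)
      ≤ (W + K).choose d * (1 + q * (exp s - 1)) ^ d :=
        (sum_range_choose_mul_choose_mul_pow_le K W hmd hy).trans hmgf
    _ ≤ (W + K).choose d * exp (q * s + s ^ 2 / 8) ^ d := by gcongr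

theorem hypergeometric_tail_bound_general (n K d : ℕ) (hn : 1 ≤ n) (hK : K ≤ n)
    (ε : ℝ) (hε : 0 < ε) (m : ℕ) (hm : (m : ℝ) ≤ ((K : ℝ) / n - ε) * d) :
    (∑ i ∈ Finset.range (m + 1), ((K.choose i : ℝ) * ((n - K).choose (d - i) : ℝ))) /
        (n.choose d : ℝ) ≤ Real.exp (-2 * ε ^ 2 * d) := by
  obtain ⟨W, rfl⟩ := Nat.exists_eq_add_of_le' hK
  rw [Nat.add_sub_cancel]
  push_cast at hm
  have hpos : (0 : ℝ) < W + K := by exact_mod_cast hn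
  have hq : (W : ℝ) / (W + K) = 1 - K / (W + K) := by field_simp; ring
  have hKn : (K : ℝ) / (W + K) ≤ 1 := div_le_one_of_le₀ (by simp) hpos.le
  have hmd : m ≤ d := by
    have : (m : ℝ) ≤ d := hm.trans (mul_le_of_le_one_left (Nat.cast_nonneg d) (by linarith))
    exact_mod_cast this
  refine div_le_of_le_mul₀ (by positivity) (by positivity) ?_
  refine (sum_range_choose_mul_choose_le_mul_exp K W hmd (s := 4 * ε) (by positivity)).trans ?_
  rw [mul_comm, hq]
  gcongr
  nlinarith [mul_le_mul_of_nonneg_left hm hε.le]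

/-- **Hypergeometric tail bound.** Let `n ≥ 1`, `0 ≤ K ≤ n`, `0 ≤ d ≤ n`,
`ε > 0`, and let `m ≥ 0` be an integer with `m ≤ (K/n − ε)·d`. Then
`Σ_{i=0}^m C(K,i)·C(n−K,d−i) / C(n,d) ≤ e^(−2ε²d)`. -/
theorem hypergeometric_tail_bound (n K d : ℕ) (hn : 1 ≤ n) (hK : K ≤ n) (hd : d ≤ n)
    (ε : ℝ) (hε : 0 < ε) (m : ℕ) (hm : (m : ℝ) ≤ ((K : ℝ) / n - ε) * d) :
    (∑ i ∈ Finset.range (m + 1), ((K.choose i : ℝ) * ((n - K).choose (d - i) : ℝ))) /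
        (n.choose d : ℝ) ≤ Real.exp (-2 * ε ^ 2 * d) :=
  hypergeometric_tail_bound_general n K d hn hK ε hε m hm
end

section
/- Let m, d be positive integers, n = (d+1)·m, let z ∈ [n] be a vertex and W ⊆ [n] \ {z} a set of K vertices. Then the number of star factors of K_n that contain a d-star centered at z whose set of leaves contains at most m elements of W is at most (Σ_{i=0}^{m} C(K, i)·C(n−1−K, d−i)) · C(n−1, m−1) · (n−m−d)!/(d!)^{m−1}. -/
/-!
A star factor containing a star at `z` with leaf set `L₀` is assembled from `L₀`, the set `C'` of
its other `m - 1` centers, and the leaf sets of those centers: pairwise disjoint `d`-sets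
partitioning the `n - m - d` remaining vertices. Choosing these leaf sets one center at a time
gives at most `(n - m - d)! / (d!) ^ (m - 1)` possibilities. If `z` is not itself a center, then
`d = 1` and its star is the edge to its center, so `z` may take over the role of that center.
The leaf sets `L₀` meeting `W` in at most `m` vertices are counted by splitting `L₀` into
`L₀ ∩ W` and `L₀ \ W`.
-/

open Finset

open scoped Nat

section BlockFamilies

variable {α : Type*} [Fintype α] [DecidableEq α]

/-- Families are taken to be `∅` off `I`, so that each is determined by its values on `I`. -/
def blockFamilies (I V : Finset α) (d : ℕ) : Finset (α → Finset α) :=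
  {B | (∀ i ∈ I, B i ⊆ V ∧ #(B i) = d) ∧ (∀ i ∉ I, B i = ∅) ∧
    ∀ i ∈ I, ∀ j ∈ I, i ≠ j → Disjoint (B i) (B j)}

theorem card_blockFamilies_empty_le_one (V : Finset α) (d : ℕ) :
    #(blockFamilies ∅ V d) ≤ 1 :=
  card_le_one.2 fun B hB B' hB' => funext fun i => by
    simp only [blockFamilies, mem_filter] at hB hB'
    rw [hB.2.2.1 i (notMem_empty i), hB'.2.2.1 i (notMem_empty i)]

theorem blockFamilies_insert_subset {i : α} {I : Finset α} (hi : i ∉ I) (V : Finset α) (d : ℕ) :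
    blockFamilies (insert i I) V d ⊆ (V.powersetCard d).biUnion fun S =>
      (blockFamilies I (V \ S) d).image (Function.update · i S) := by
  intro B hB
  simp only [blockFamilies, mem_filter, mem_univ, true_and] at hB
  obtain ⟨hsub, hoff, hdisj⟩ := hB
  obtain ⟨hBi, hcard⟩ := hsub i (mem_insert_self i I)
  refine mem_biUnion.2 ⟨B i, mem_powersetCard.2 ⟨hBi, hcard⟩,
    mem_image.2 ⟨Function.update B i ∅, ?_, by simp⟩⟩
  have hupdate : ∀ j ∈ I, Function.update B i ∅ j = B j := fun j hj =>
    Function.update_of_ne (ne_of_mem_of_not_mem hj hi) _ _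
  simp only [blockFamilies, mem_filter, mem_univ, true_and]
  refine ⟨fun j hj => ?_, fun j hj => ?_, fun j hj k hk hjk => ?_⟩
  · obtain ⟨hBj, hcardj⟩ := hsub j (mem_insert_of_mem hj)
    rw [hupdate j hj, subset_sdiff]
    exact ⟨⟨hBj, hdisj j (mem_insert_of_mem hj) i (mem_insert_self i I)
      (ne_of_mem_of_not_mem hj hi)⟩, hcardj⟩
  · rcases eq_or_ne j i with rfl | hji
    · exact Function.update_self _ _ _
    · rw [Function.update_of_ne hji]
      exact hoff j (by simp [hji, hj])
  · rw [hupdate j hj, hupdate k hk]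
    exact hdisj j (mem_insert_of_mem hj) k (mem_insert_of_mem hk) hjk

theorem card_blockFamilies_mul_le (I V : Finset α) (d : ℕ) :
    #(blockFamilies I V d) * d ! ^ #I ≤ (#V)! := by
  induction I using Finset.induction_on generalizing V with
  | empty => simpa using (card_blockFamilies_empty_le_one V d).trans (Nat.factorial_pos _)
  | insert i I hi ih =>
    calc #(blockFamilies (insert i I) V d) * d ! ^ #(insert i I)
        ≤ (∑ S ∈ V.powersetCard d, #(blockFamilies I (V \ S) d)) * (d ! ^ #I * d !) := by
          rw [card_insert_of_notMem hi, pow_succ]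
          gcongr
          exact (card_le_card (blockFamilies_insert_subset hi V d)).trans
            (card_biUnion_le.trans (sum_le_sum fun S _ => card_image_le))
      _ = ∑ S ∈ V.powersetCard d, #(blockFamilies I (V \ S) d) * d ! ^ #I * d ! := by
          rw [sum_mul]
          simp only [mul_assoc]
      _ ≤ ∑ S ∈ V.powersetCard d, (#V - d)! * d ! := by
          gcongr with S hS
          obtain ⟨hSV, hSd⟩ := mem_powersetCard.1 hS
          rw [show #V - d = #(V \ S) by rw [card_sdiff_of_subset hSV, hSd]]
          exact ih _
      _ ≤ (#V)! := by
          rw [sum_const, card_powersetCard, smul_eq_mul]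
          rcases le_or_gt d #V with hd | hd
          · rw [← Nat.choose_mul_factorial_mul_factorial hd, mul_assoc, mul_comm (d !)]
          · simp [Nat.choose_eq_zero_of_lt hd]

end BlockFamilies

theorem card_powersetCard_filter_card_inter_le {β : Type*} [DecidableEq β] {U W : Finset β}
    (hWU : W ⊆ U) (d m : ℕ) :
    #{L ∈ U.powersetCard d | #(L ∩ W) ≤ m} ≤
      ∑ i ∈ range (m + 1), (#W).choose i * (#U - #W).choose (d - i) := by
  have hcover : {L ∈ U.powersetCard d | #(L ∩ W) ≤ m} ⊆ (range (m + 1)).biUnion fun i =>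
      (W.powersetCard i ×ˢ (U \ W).powersetCard (d - i)).image fun p => p.1 ∪ p.2 := by
    intro L hL
    obtain ⟨hLU, hLd⟩ := mem_powersetCard.1 (mem_filter.1 hL).1
    have hsplit := card_inter_add_card_sdiff L W
    refine mem_biUnion.2 ⟨#(L ∩ W), mem_range.2 (Nat.lt_succ_of_le (mem_filter.1 hL).2),
      mem_image.2 ⟨(L ∩ W, L \ W), mem_product.2 ⟨?_, ?_⟩, sup_inf_sdiff L W⟩⟩
    · exact mem_powersetCard.2 ⟨inter_subset_right, rfl⟩
    · exact mem_powersetCard.2 ⟨sdiff_subset_sdiff hLU subset_rfl, show #(L \ W) = _ by omega⟩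
  calc _ ≤ _ := card_le_card hcover
    _ ≤ ∑ i ∈ range (m + 1), #(W.powersetCard i ×ˢ (U \ W).powersetCard (d - i)) :=
      card_biUnion_le.trans (sum_le_sum fun _ _ => card_image_le)
    _ = _ := by simp only [card_product, card_powersetCard, card_sdiff_of_subset hWU]

def starForest {n : ℕ} (z : Fin n) (L₀ C' : Finset (Fin n)) (B : Fin n → Finset (Fin n)) :
    Finset (Sym2 (Fin n)) :=
  L₀.image (fun v => s(z, v)) ∪ C'.biUnion fun c => (B c).image fun v => s(c, v)

namespace IsStarFactorOn

variable {n m d : ℕ} {F : Finset (Sym2 (Fin n))} {C : Finset (Fin n)}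
  {L : Fin n → Finset (Fin n)} {c c' x z : Fin n} {L₀ : Finset (Fin n)}

theorem disjoint_insert_leaves (h : IsStarFactorOn m d F C L) (hc : c ∈ C) (hc' : c' ∈ C)
    (hne : c ≠ c') : Disjoint (insert c (L c)) (insert c' (L c')) :=
  h.2.2.1 c hc c' hc' hne

theorem notMem_leaves (h : IsStarFactorOn m d F C L) (hc : c ∈ C) (hc' : c' ∈ C) :
    c ∉ L c' := by
  rcases eq_or_ne c c' with rfl | hne
  · exact (h.2.1 c hc).1
  · exact fun hcc' => disjoint_left.1 (h.disjoint_insert_leaves hc hc' hne)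
      (mem_insert_self c _) (mem_insert_of_mem hcc')

theorem eq_of_mem_leaves (h : IsStarFactorOn m d F C L) (hc : c ∈ C) (hc' : c' ∈ C)
    (hx : x ∈ L c) (hx' : x ∈ L c') : c = c' := by
  by_contra hne
  exact disjoint_left.1 (h.disjoint_insert_leaves hc hc' hne) (mem_insert_of_mem hx)
    (mem_insert_of_mem hx')

theorem exists_mem_leaves_of_notMem (h : IsStarFactorOn m d F C L) (hz : z ∉ C) :
    ∃ c ∈ C, z ∈ L c := by
  have hcover : z ∈ C.biUnion fun c => insert c (L c) := h.2.2.2.1 ▸ mem_univ z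
  obtain ⟨c, hc, hzc⟩ := mem_biUnion.1 hcover
  exact ⟨c, hc, (mem_insert.1 hzc).resolve_left fun hzc => hz (hzc ▸ hc)⟩

theorem exists_mk_eq_of_mem (h : IsStarFactorOn m d F C L) {e : Sym2 (Fin n)} (he : e ∈ F) :
    ∃ c ∈ C, ∃ v ∈ L c, s(c, v) = e := by
  rw [h.2.2.2.2] at he
  simpa using he

theorem mk_mem_iff_mem_leaves (h : IsStarFactorOn m d F C L) (hz : z ∈ C) (v : Fin n) :
    s(z, v) ∈ F ↔ v ∈ L z := by
  refine ⟨fun hv => ?_, fun hv => h.2.2.2.2 ▸ mem_biUnion.2 ⟨z, hz, mem_image_of_mem _ hv⟩⟩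
  obtain ⟨c, hc, w, hw, hcw⟩ := h.exists_mk_eq_of_mem hv
  rcases Sym2.eq_iff.1 hcw with ⟨rfl, rfl⟩ | ⟨rfl, rfl⟩
  · exact hw
  · exact absurd hw (h.notMem_leaves hz hc)

/-- Either `z` is a center, or `d = 1` and the star at `z` is the edge from the leaf `z` to its
center. -/
theorem exists_block (h : IsStarFactorOn m d F C L) (hL₀ : #L₀ = d)
    (hsub : L₀.image (fun v => s(z, v)) ⊆ F) :
    ∃ c ∈ C, insert z L₀ = insert c (L c) ∧
      L₀.image (fun v => s(z, v)) = (L c).image fun v => s(c, v) := by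
  by_cases hz : z ∈ C
  · have hL₀z : L₀ = L z := eq_of_subset_of_card_le
      (fun v hv => (h.mk_mem_iff_mem_leaves hz v).1 (hsub (mem_image_of_mem _ hv)))
      (by rw [hL₀, (h.2.1 z hz).2])
    exact ⟨z, hz, by rw [hL₀z], by rw [hL₀z]⟩
  obtain ⟨c, hc, hzc⟩ := h.exists_mem_leaves_of_notMem hz
  have hL₀c : L₀ ⊆ {c} := by
    intro v hv
    obtain ⟨c', hc', w, hw, hc'w⟩ := h.exists_mk_eq_of_mem (hsub (mem_image_of_mem _ hv))
    rcases Sym2.eq_iff.1 hc'w with ⟨rfl, -⟩ | ⟨rfl, rfl⟩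
    · exact absurd hc' hz
    · exact mem_singleton.2 (h.eq_of_mem_leaves hc' hc hw hzc)
  have hLc : #(L c) = d := (h.2.1 c hc).2
  have hL₀eq : L₀ = {c} := eq_of_subset_of_card_le hL₀c
    (by rw [card_singleton, hL₀, ← hLc]; exact card_pos.2 ⟨z, hzc⟩)
  have hLceq : L c = {z} := (eq_of_subset_of_card_le (singleton_subset_iff.2 hzc)
    (by rw [card_singleton, hLc, ← hL₀, hL₀eq, card_singleton])).symm
  refine ⟨c, hc, ?_, ?_⟩
  · rw [hL₀eq, hLceq, pair_comm]
  · rw [hL₀eq, hLceq, image_singleton, image_singleton, Sym2.eq_swap]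

theorem exists_eq_starForest (h : IsStarFactorOn m d F C L) (hc : c ∈ C)
    (hblock : insert z L₀ = insert c (L c))
    (hstar : L₀.image (fun v => s(z, v)) = (L c).image fun v => s(c, v)) :
    ∃ C' ∈ (univ.erase z).powersetCard (m - 1), Disjoint L₀ C' ∧
      ∃ B ∈ blockFamilies C' (insert z L₀ ∪ C')ᶜ d, F = starForest z L₀ C' B := by
  have hother : ∀ {x}, x ∈ C.erase c → x ∉ insert c (L c) := fun hx hxc =>
    (mem_insert.1 hxc).elim (ne_of_mem_erase hx) (h.notMem_leaves (mem_of_mem_erase hx) hc)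
  refine ⟨C.erase c, mem_powersetCard.2 ⟨fun x hx => mem_erase.2 ⟨?_, mem_univ x⟩, ?_⟩, ?_,
    (C.erase c).piecewise L fun _ => ∅, ?_, ?_⟩
  · rintro rfl
    exact hother hx (hblock ▸ mem_insert_self _ L₀)
  · rw [card_erase_of_mem hc, h.1]
  · exact disjoint_left.2 fun x hx hx' => hother hx' (hblock ▸ mem_insert_of_mem hx)
  · simp only [blockFamilies, mem_filter, mem_univ, true_and]
    refine ⟨fun x hx => ?_, fun x hx => piecewise_eq_of_notMem _ _ _ hx,
      fun x hx y hy hxy => ?_⟩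
    · have hxC := mem_of_mem_erase hx
      rw [piecewise_eq_of_mem _ _ _ hx]
      refine ⟨fun v hv => mem_compl.2 fun hv' => ?_, (h.2.1 x hxC).2⟩
      rcases mem_union.1 (hblock ▸ hv') with hv' | hv'
      · exact disjoint_left.1 (h.disjoint_insert_leaves hxC hc (ne_of_mem_erase hx))
          (mem_insert_of_mem hv) hv'
      · exact h.notMem_leaves (mem_of_mem_erase hv') hxC hv
    · rw [piecewise_eq_of_mem _ _ _ hx, piecewise_eq_of_mem _ _ _ hy]
      exact (h.disjoint_insert_leaves (mem_of_mem_erase hx) (mem_of_mem_erase hy) hxy).mono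
        (subset_insert _ _) (subset_insert _ _)
  · rw [h.2.2.2.2, starForest, hstar]
    conv_lhs => rw [← insert_erase hc, biUnion_insert]
    congr 1
    exact biUnion_congr rfl fun x hx => by rw [piecewise_eq_of_mem _ _ _ hx]

end IsStarFactorOn

theorem IsStarFactor.exists_eq_starForest {n m d : ℕ} {F : Finset (Sym2 (Fin n))} {z : Fin n}
    {L₀ : Finset (Fin n)} (hF : IsStarFactor m d F) (hL₀ : #L₀ = d)
    (hsub : L₀.image (fun v => s(z, v)) ⊆ F) :
    ∃ C' ∈ (univ.erase z).powersetCard (m - 1), Disjoint L₀ C' ∧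
      ∃ B ∈ blockFamilies C' (insert z L₀ ∪ C')ᶜ d, F = starForest z L₀ C' B := by
  obtain ⟨C, L, h⟩ := hF
  obtain ⟨c, hc, hblock, hstar⟩ := h.exists_block hL₀ hsub
  exact h.exists_eq_starForest hc hblock hstar

open Classical in
theorem card_starFactors_mul_le {n m d : ℕ} (hm : 0 < m) (z : Fin n)
    (𝓛 : Finset (Finset (Fin n))) (h𝓛 : 𝓛 ⊆ (univ.erase z).powersetCard d) :
    #{F : Finset (Sym2 (Fin n)) | IsStarFactor m d F ∧
        ∃ L₀ ∈ 𝓛, L₀.image (fun v => s(z, v)) ⊆ F} * d ! ^ (m - 1) ≤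
      #𝓛 * (n - 1).choose (m - 1) * (n - m - d)! := by
  set P := {p ∈ 𝓛 ×ˢ (univ.erase z).powersetCard (m - 1) | Disjoint p.1 p.2}
  set V : Finset (Fin n) × Finset (Fin n) → Finset (Fin n) := fun p => (insert z p.1 ∪ p.2)ᶜ
  have hcover : ({F : Finset (Sym2 (Fin n)) | IsStarFactor m d F ∧
      ∃ L₀ ∈ 𝓛, L₀.image (fun v => s(z, v)) ⊆ F} : Finset _) ⊆
        P.biUnion fun p => (blockFamilies p.2 (V p) d).image (starForest z p.1 p.2) := by
    intro F hF
    obtain ⟨hF, L₀, hL₀, hsub⟩ := (mem_filter.1 hF).2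
    obtain ⟨C', hC', hdisj, B, hB, rfl⟩ :=
      hF.exists_eq_starForest (mem_powersetCard.1 (h𝓛 hL₀)).2 hsub
    exact mem_biUnion.2 ⟨(L₀, C'), mem_filter.2 ⟨mem_product.2 ⟨hL₀, hC'⟩, hdisj⟩,
      mem_image_of_mem _ hB⟩
  have hV : ∀ p ∈ P, #(V p) = n - m - d ∧ #p.2 = m - 1 := by
    intro p hp
    obtain ⟨hp, hdisj⟩ := mem_filter.1 hp
    obtain ⟨hzL₀, hL₀⟩ := mem_powersetCard.1 (h𝓛 (mem_product.1 hp).1)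
    obtain ⟨hzC', hC'⟩ := mem_powersetCard.1 (mem_product.1 hp).2
    have hz : z ∉ p.1 ∪ p.2 := fun hz => (mem_union.1 hz).elim
      (fun h => notMem_erase z univ (hzL₀ h)) (fun h => notMem_erase z univ (hzC' h))
    refine ⟨?_, hC'⟩
    rw [card_compl, Fintype.card_fin, insert_union, card_insert_of_notMem hz,
      card_union_of_disjoint hdisj, hL₀, hC']
    omega
  calc _ ≤ (∑ p ∈ P, #(blockFamilies p.2 (V p) d)) * d ! ^ (m - 1) := by
        gcongr
        exact (card_le_card hcover).trans
          (card_biUnion_le.trans (sum_le_sum fun _ _ => card_image_le))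
    _ = ∑ p ∈ P, #(blockFamilies p.2 (V p) d) * d ! ^ #p.2 := by
        rw [sum_mul]
        exact sum_congr rfl fun p hp => by rw [(hV p hp).2]
    _ ≤ ∑ _p ∈ P, (n - m - d)! :=
        sum_le_sum fun p hp => (hV p hp).1 ▸ card_blockFamilies_mul_le _ _ _
    _ ≤ #𝓛 * (n - 1).choose (m - 1) * (n - m - d)! := by
        rw [sum_const, smul_eq_mul]
        gcongr
        refine card_filter_le _ _ |>.trans ?_
        rw [card_product, card_powersetCard, card_erase_of_mem (mem_univ z), card_univ,
          Fintype.card_fin]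

theorem star_factors_with_restricted_star_bound_general (m d : ℕ) (hm : 0 < m)
    (n : ℕ) (z : Fin n) (W : Finset (Fin n)) (hzW : z ∉ W)
    (K : ℕ) (hK : W.card = K) :
    (({F : Finset (Sym2 (Fin n)) | IsStarFactor m d F ∧
        ∃ L : Finset (Fin n), z ∉ L ∧ L.card = d ∧
          L.image (fun v => s(z, v)) ⊆ F ∧ (L ∩ W).card ≤ m}).ncard : ℝ) ≤
      (∑ i ∈ Finset.range (m + 1), ((K.choose i : ℝ) * ((n - 1 - K).choose (d - i) : ℝ))) *
        ((n - 1).choose (m - 1) : ℝ) * (Nat.factorial (n - m - d) : ℝ) /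
          ((Nat.factorial d : ℝ)) ^ (m - 1) := by
  classical
  set 𝓛 := {L ∈ (univ.erase z).powersetCard d | #(L ∩ W) ≤ m}
  have hleaves : #𝓛 ≤ ∑ i ∈ range (m + 1), K.choose i * (n - 1 - K).choose (d - i) := by
    have hWU : W ⊆ univ.erase z := fun w hw => mem_erase.2 ⟨ne_of_mem_of_not_mem hw hzW, mem_univ w⟩
    simpa [hK] using card_powersetCard_filter_card_inter_le hWU d m
  have hsubset : {F : Finset (Sym2 (Fin n)) | IsStarFactor m d F ∧
      ∃ L : Finset (Fin n), z ∉ L ∧ L.card = d ∧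
        L.image (fun v => s(z, v)) ⊆ F ∧ (L ∩ W).card ≤ m} ⊆
      ↑({F : Finset (Sym2 (Fin n)) | IsStarFactor m d F ∧
        ∃ L₀ ∈ 𝓛, L₀.image (fun v => s(z, v)) ⊆ F} : Finset _) := by
    rintro F ⟨hF, L, hzL, hL, hsub, hLW⟩
    simp only [coe_filter, mem_univ, true_and, Set.mem_ofPred_eq]
    exact ⟨hF, L, mem_filter.2 ⟨mem_powersetCard.2 ⟨fun v hv => mem_erase.2
      ⟨ne_of_mem_of_not_mem hv hzL, mem_univ v⟩, hL⟩, hLW⟩, hsub⟩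
  have hncard := (Set.ncard_le_ncard hsubset).trans_eq (Set.ncard_coe_finset _)
  rw [le_div_iff₀ (by positivity)]
  exact_mod_cast (Nat.mul_le_mul_right _ hncard).trans
    ((card_starFactors_mul_le hm z 𝓛 (filter_subset _ _)).trans (by gcongr))

/-- Let `m, d` be positive integers, `n = (d+1)·m`, `z ∈ [n]` a vertex and
`W ⊆ [n] \ {z}` a set of `K` vertices. The number of star factors of `K_n` containing a
`d`-star centered at `z` whose leaf set contains at most `m` elements of `W` is at most
`(Σ_{i=0}^m C(K,i)·C(n−1−K,d−i)) · C(n−1,m−1) · (n−m−d)!/(d!)^(m−1)`. -/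
theorem star_factors_with_restricted_star_bound (m d : ℕ) (hm : 0 < m) (hd : 0 < d)
    (n : ℕ) (hn : n = (d + 1) * m) (z : Fin n) (W : Finset (Fin n)) (hzW : z ∉ W)
    (K : ℕ) (hK : W.card = K) :
    (({F : Finset (Sym2 (Fin n)) | IsStarFactor m d F ∧
        ∃ L : Finset (Fin n), z ∉ L ∧ L.card = d ∧
          L.image (fun v => s(z, v)) ⊆ F ∧ (L ∩ W).card ≤ m}).ncard : ℝ) ≤
      (∑ i ∈ Finset.range (m + 1), ((K.choose i : ℝ) * ((n - 1 - K).choose (d - i) : ℝ))) *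
        ((n - 1).choose (m - 1) : ℝ) * (Nat.factorial (n - m - d) : ℝ) /
          ((Nat.factorial d : ℝ)) ^ (m - 1) :=
  star_factors_with_restricted_star_bound_general m d hm n z W hzW K hK
end

section
/- Let m, d be positive integers and n = (d+1)·m. Every spanning star-tree T of K_n contains exactly one star factor of K_n, namely the edge set obtained from T by removing the m−1 path edges joining the star centers. -/
open Finset

/-!
A leaf `v` of a star of `F₀` lies on exactly one edge of `T = F₀ ∪ P`: the path `P` only
touches centers, and the stars of `F₀` are vertex-disjoint. Any star factor `F ⊆ T` covers `v`,
so it contains that edge; hence `F₀ ⊆ F`, and both have `m·d` edges.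
-/

namespace IsStarFactorOn

variable {n m d : ℕ} {F : Finset (Sym2 (Fin n))} {C : Finset (Fin n)}
  {L : Fin n → Finset (Fin n)}

lemma mem_iff (h : IsStarFactorOn m d F C L) {e : Sym2 (Fin n)} :
    e ∈ F ↔ ∃ z ∈ C, ∃ v ∈ L z, s(z, v) = e := by
  rw [h.2.2.2.2]
  simp only [mem_biUnion, mem_image]

lemma notMem_centers_of_mem_leaves (h : IsStarFactorOn m d F C L) {z v : Fin n} (hz : z ∈ C)
    (hv : v ∈ L z) : v ∉ C := by
  intro hvC
  obtain rfl | hzv := eq_or_ne z v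
  · exact (h.2.1 z hz).1 hv
  · exact disjoint_left.mp (h.2.2.1 z hz v hvC hzv) (mem_insert_of_mem hv) (mem_insert_self v _)

lemma eq_of_mem_leaves_of_mem (h : IsStarFactorOn m d F C L) {z v : Fin n} (hz : z ∈ C)
    (hv : v ∈ L z) {e : Sym2 (Fin n)} (he : e ∈ F) (hve : v ∈ e) : e = s(z, v) := by
  obtain ⟨z', hz', w, hw, rfl⟩ := h.mem_iff.mp he
  rcases Sym2.mem_iff.mp hve with rfl | rfl
  · exact absurd hz' (h.notMem_centers_of_mem_leaves hz hv)
  · obtain rfl : z' = z := by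
      by_contra hne
      exact disjoint_left.mp (h.2.2.1 z' hz' z hz hne) (mem_insert_of_mem hw) (mem_insert_of_mem hv)
    rfl

lemma exists_mem_of_pos (h : IsStarFactorOn m d F C L) (hd : 0 < d) (v : Fin n) :
    ∃ e ∈ F, v ∈ e := by
  have hv : v ∈ C.biUnion (fun z => insert z (L z)) := h.2.2.2.1 ▸ mem_univ v
  obtain ⟨z, hz, hvz⟩ := mem_biUnion.mp hv
  rcases mem_insert.mp hvz with rfl | hvL
  · obtain ⟨w, hw⟩ := card_pos.mp ((h.2.1 v hz).2 ▸ hd)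
    exact ⟨s(v, w), h.mem_iff.mpr ⟨v, hz, w, hw, rfl⟩, Sym2.mem_mk_left v w⟩
  · exact ⟨s(z, v), h.mem_iff.mpr ⟨z, hz, v, hvL, rfl⟩, Sym2.mem_mk_right z v⟩

lemma card_eq (h : IsStarFactorOn m d F C L) : F.card = m * d := by
  obtain ⟨hC, hL, hdisj, -, hF⟩ := h
  have hstar : ∀ z ∈ C, ((L z).image (fun v => s(z, v))).card = d := fun z hz => by
    rw [card_image_of_injective _ fun _ _ => Sym2.congr_right.mp, (hL z hz).2]
  have hpairwise :
      (C : Set (Fin n)).PairwiseDisjoint (fun z => (L z).image (fun v => s(z, v))) := by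
    intro z hz z' hz' hne
    refine disjoint_left.mpr ?_
    simp only [mem_image]
    rintro _ ⟨v, hv, rfl⟩ ⟨v', hv', heq⟩
    rcases Sym2.eq_iff.mp heq with ⟨hzz', -⟩ | ⟨-, hvz'⟩
    · exact hne hzz'.symm
    · exact disjoint_left.mp (hdisj z hz z' hz' hne) (mem_insert_self z _)
        (hvz' ▸ mem_insert_of_mem hv')
  rw [hF, card_biUnion hpairwise, sum_congr rfl hstar, sum_const, hC, smul_eq_mul]

end IsStarFactorOn

lemma IsPathOn.mem_of_mem_edge {n : ℕ} {C : Finset (Fin n)} {P : Finset (Sym2 (Fin n))}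
    (h : IsPathOn C P) {e : Sym2 (Fin n)} (he : e ∈ P) {v : Fin n} (hv : v ∈ e) : v ∈ C := by
  obtain ⟨l, -, rfl, rfl⟩ := h
  obtain ⟨⟨a, b⟩, hab, rfl⟩ := List.mem_map.mp (List.mem_toFinset.mp he)
  rw [List.mem_toFinset]
  rcases Sym2.mem_iff.mp hv with rfl | rfl
  · exact (List.of_mem_zip hab).1
  · exact List.mem_of_mem_tail (List.of_mem_zip hab).2

lemma IsStarFactorOn.subset_of_isStarFactor_subset_union {n m d : ℕ} {F₀ P F : Finset (Sym2 (Fin n))}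
    {C : Finset (Fin n)} {L : Fin n → Finset (Fin n)} (h₀ : IsStarFactorOn m d F₀ C L)
    (hP : IsPathOn C P) (hF : IsStarFactor m d F) (hsub : F ⊆ F₀ ∪ P) : F₀ ⊆ F := by
  obtain ⟨C', L', hF⟩ := hF
  intro e he
  obtain ⟨z, hz, v, hv, rfl⟩ := h₀.mem_iff.mp he
  have hd : 0 < d := (h₀.2.1 z hz).2 ▸ card_pos.mpr ⟨v, hv⟩
  obtain ⟨e', he'F, hve'⟩ := hF.exists_mem_of_pos hd v
  rcases mem_union.mp (hsub he'F) with he'₀ | he'P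
  · exact h₀.eq_of_mem_leaves_of_mem hz hv he'₀ hve' ▸ he'F
  · exact absurd (hP.mem_of_mem_edge he'P hve') (h₀.notMem_centers_of_mem_leaves hz hv)

theorem spanning_star_tree_unique_star_factor_general (m d : ℕ)
    (n : ℕ) (T F0 P : Finset (Sym2 (Fin n)))
    (C : Finset (Fin n)) (L : Fin n → Finset (Fin n))
    (hF0 : IsStarFactorOn m d F0 C L) (hP : IsPathOn C P)
    (hFP : Disjoint F0 P) (hTFP : T = F0 ∪ P) :
    IsStarFactor m d (T \ P) ∧
    ∀ F : Finset (Sym2 (Fin n)), IsStarFactor m d F → F ⊆ T → F = T \ P := by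
  have hTP : T \ P = F0 := by rw [hTFP, union_sdiff_cancel_right hFP]
  refine ⟨hTP ▸ ⟨C, L, hF0⟩, fun F hF hFT => ?_⟩
  have hF0F : F0 ⊆ F := hF0.subset_of_isStarFactor_subset_union hP hF (hTFP ▸ hFT)
  obtain ⟨C', L', hF'⟩ := hF
  rw [hTP]
  exact (eq_of_subset_of_card_le hF0F (hF'.card_eq.trans hF0.card_eq.symm).le).symm

/-- Let `m, d` be positive integers and `n = (d+1)·m`. Every spanning
star-tree `T = F₀ ∪ P` of `K_n` (with `F₀` its star factor with center set `C` and `P` the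
path edges joining the centers) contains exactly one star factor of `K_n`, namely the edge
set `T \ P` obtained from `T` by removing the path edges. -/
theorem spanning_star_tree_unique_star_factor (m d : ℕ) (hm : 0 < m) (hd : 0 < d)
    (n : ℕ) (hn : n = (d + 1) * m) (T F0 P : Finset (Sym2 (Fin n)))
    (C : Finset (Fin n)) (L : Fin n → Finset (Fin n))
    (hT : IsSpanningTree T) (hF0 : IsStarFactorOn m d F0 C L) (hP : IsPathOn C P)
    (hFP : Disjoint F0 P) (hTFP : T = F0 ∪ P) :
    IsStarFactor m d (T \ P) ∧
    ∀ F : Finset (Sym2 (Fin n)), IsStarFactor m d F → F ⊆ T → F = T \ P :=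
  spanning_star_tree_unique_star_factor_general m d n T F0 P C L hF0 hP hFP hTFP
end
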